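/- arXiv:1505.04158 — 3 statements merged into one kernel-verified Lean document; each statement's English description precedes it below -/
import Mathlib

section
/- On a probability space, let ((B_m, B'_m))_{m∈ℤ} be a family of pairs of random variables with values in {0,1}×{0,1} such that the pairs (B_m, B'_m) are mutually independent across m ∈ ℤ, and suppose there is a constant θ ∈ [0,1) with E|B'_m − B_m| ≤ θ for every m. For integers m ≤ n set I(n,m) := (∏_{j=m+1}^{n} (B'_j − B_j)) · B_m. Then for every n ∈ ℤ the series Σ_{m ≤ n} I(n,m) converges absolutely almost surely, its partial sums K(n,i) = Σ_{m=i}^{n} I(n,m) converge in L^k for every k ≥ 1 as i → −∞, and the almost sure limit K_n := Σ_{m ≤ n} I(n,m) takes values in {0,1} almost surely. -/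
/-!
Let `E_j` be the event `B_j ≠ B'_j`. Its probability is `E|B'_j - B_j| ≤ θ`, so by independence
the event that `E_j` holds for every `j ∈ [i, n]` has probability at most `θ^(n-i+1) → 0`.
Hence almost surely some `J ≤ n` has `B_J = B'_J`; the factor `B'_J - B_J = 0` kills every term
with `m < J`, and the series is a finite sum. The finite sums `K(n,i)` obey
`K(n+1,i) = (B'_{n+1} - B_{n+1}) K(n,i) + B_{n+1}`, i.e. they equal `B'_{n+1}` or `B_{n+1}`
according as `K(n,i)` is `1` or `0`, so they stay in `{0,1}`. Finally `K(n,i) - K_n` vanishes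
off the event `⋂_{j ∈ [i,n]} E_j` and is bounded by `1` on it, which gives the `L^k` bound
`θ^((n-i+1)/k)`.
-/

open MeasureTheory ProbabilityTheory Filter Finset Topology
open scoped ENNReal

/-- `kpzI b b' n m` is `I(n,m)` and `kpzK b b' n` is `K_n`, for fixed realisations `b, b'`. -/
noncomputable def kpzI (b b' : ℤ → ℝ) (n m : ℤ) : ℝ :=
  (∏ j ∈ Icc (m + 1) n, (b' j - b j)) * b m

noncomputable def kpzK (b b' : ℤ → ℝ) (n : ℤ) : ℝ :=
  ∑' m : {m : ℤ // m ≤ n}, kpzI b b' n m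

section Deterministic

variable {b b' : ℤ → ℝ} {n : ℤ}

theorem kpzI_eq_zero_of_lt {J m : ℤ} (hJn : J ≤ n) (hJ : b' J = b J) (hm : m < J) :
    kpzI b b' n m = 0 := by
  rw [kpzI, prod_eq_zero (f := fun j => b' j - b j) (mem_Icc.2 ⟨by omega, hJn⟩)
    (sub_eq_zero.2 hJ), zero_mul]

theorem kpzI_eq_zero_of_notMem_subtype {J c : ℤ} (hJn : J ≤ n) (hJ : b' J = b J) (hc : c ≤ J)
    (m : {m : ℤ // m ≤ n}) (hm : m ∉ (Icc c n).subtype (· ≤ n)) : kpzI b b' n m = 0 := by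
  rw [mem_subtype, mem_Icc] at hm
  exact kpzI_eq_zero_of_lt hJn hJ (by have := m.2; omega)

theorem summable_abs_kpzI {J : ℤ} (hJn : J ≤ n) (hJ : b' J = b J) :
    Summable fun m : {m : ℤ // m ≤ n} => |kpzI b b' n m| :=
  summable_of_ne_finset_zero fun m hm => by
    rw [kpzI_eq_zero_of_notMem_subtype hJn hJ le_rfl m hm, abs_zero]

theorem kpzK_eq_sum {J c : ℤ} (hJn : J ≤ n) (hJ : b' J = b J) (hc : c ≤ J) :
    kpzK b b' n = ∑ m ∈ Icc c n, kpzI b b' n m := by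
  rw [kpzK, tsum_eq_sum (kpzI_eq_zero_of_notMem_subtype hJn hJ hc),
    sum_subtype_eq_sum_filter, filter_true_of_mem fun m hm => (mem_Icc.1 hm).2]

theorem sum_kpzI_add_one {i : ℤ} (hi : i ≤ n + 1) :
    ∑ m ∈ Icc i (n + 1), kpzI b b' (n + 1) m
      = (b' (n + 1) - b (n + 1)) * ∑ m ∈ Icc i n, kpzI b b' n m + b (n + 1) := by
  have hI : ∀ m ∈ Icc i n, kpzI b b' (n + 1) m = (b' (n + 1) - b (n + 1)) * kpzI b b' n m := by
    intro m hm
    rw [kpzI, kpzI, ← insert_Icc_right_eq_Icc_add_one (by have := (mem_Icc.1 hm).2; omega),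
      prod_insert (by simp), mul_assoc]
  rw [← insert_Icc_right_eq_Icc_add_one hi, sum_insert (by simp), sum_congr rfl hI, ← mul_sum,
    kpzI, Icc_eq_empty (by omega), prod_empty, one_mul, add_comm]

theorem sum_kpzI_eq_zero_or_one (hb : ∀ j, b j = 0 ∨ b j = 1) (hb' : ∀ j, b' j = 0 ∨ b' j = 1)
    (i n : ℤ) : ∑ m ∈ Icc i n, kpzI b b' n m = 0 ∨ ∑ m ∈ Icc i n, kpzI b b' n m = 1 := by
  rcases lt_or_ge n i with hn | hn
  · simp [Icc_eq_empty_of_lt hn]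
  induction n, hn using Int.leInduction with
  | base => simpa [kpzI] using hb i
  | succ n hn ih =>
    rw [sum_kpzI_add_one (by omega)]
    rcases ih with h | h <;> rw [h]
    · simpa using hb (n + 1)
    · simpa using hb' (n + 1)

theorem abs_sum_kpzI_sub_kpzK_le_one (hb : ∀ j, b j = 0 ∨ b j = 1)
    (hb' : ∀ j, b' j = 0 ∨ b' j = 1) {J : ℤ} (hJn : J ≤ n) (hJ : b' J = b J) (i : ℤ) :
    |∑ m ∈ Icc i n, kpzI b b' n m - kpzK b b' n| ≤ 1 := by
  rw [kpzK_eq_sum hJn hJ (min_le_right i J)]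
  rcases sum_kpzI_eq_zero_or_one hb hb' i n with h | h <;>
    rcases sum_kpzI_eq_zero_or_one hb hb' (min i J) n with h' | h' <;>
    rw [h, h'] <;> norm_num

end Deterministic

section Probability

variable {Ω : Type*} [MeasurableSpace Ω] {μ : Measure Ω}

theorem measure_ne_le_of_integral_abs_sub_le [IsFiniteMeasure μ] {X Y : Ω → ℝ}
    (hX : ∀ ω, X ω = 0 ∨ X ω = 1) (hY : ∀ ω, Y ω = 0 ∨ Y ω = 1)
    (hXm : Measurable X) (hYm : Measurable Y) {θ : ℝ} (h : ∫ ω, |Y ω - X ω| ∂μ ≤ θ) :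
    μ {ω | X ω ≠ Y ω} ≤ ENNReal.ofReal θ := by
  have hind : (fun ω => |Y ω - X ω|) = {ω | X ω ≠ Y ω}.indicator 1 := by
    ext ω
    rcases hX ω with hx | hx <;> rcases hY ω with hy | hy <;> simp [hx, hy]
  have hmeas : MeasurableSet {ω | X ω ≠ Y ω} := (measurableSet_eq_fun hXm hYm).compl
  rw [hind, integral_indicator_one hmeas] at h
  rw [← ofReal_measureReal]
  exact ENNReal.ofReal_le_ofReal h

theorem measure_biInter_ne_le_pow {ι : Type*} {X Y : ι → Ω → ℝ}
    (hindep : iIndepFun (fun i ω => (X i ω, Y i ω)) μ) {r : ℝ≥0∞}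
    (hr : ∀ i, μ {ω | X i ω ≠ Y i ω} ≤ r) (s : Finset ι) :
    μ (⋂ i ∈ s, {ω | X i ω ≠ Y i ω}) ≤ r ^ #s := by
  rw [hindep.meas_biInter (s := fun i => {ω | X i ω ≠ Y i ω}) fun i _ =>
    ⟨{p : ℝ × ℝ | p.1 ≠ p.2}, (measurableSet_eq_fun measurable_fst measurable_snd).compl, rfl⟩]
  exact prod_le_pow_card _ _ _ fun i _ => hr i

variable {B B' : ℤ → Ω → ℝ}

theorem tendsto_measure_biInter_Icc_ne (hindep : iIndepFun (fun m ω => (B m ω, B' m ω)) μ)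
    {r : ℝ≥0∞} (hr : ∀ m, μ {ω | B m ω ≠ B' m ω} ≤ r) (hr1 : r < 1) (n : ℤ) :
    Tendsto (fun i => μ (⋂ j ∈ Icc i n, {ω | B j ω ≠ B' j ω})) atBot (𝓝 0) := by
  have hcard : Tendsto (fun i : ℤ => #(Icc i n)) atBot atTop := by
    simp only [Int.card_Icc]
    exact tendsto_atTop.2 fun t => eventually_atBot.2 ⟨n + 1 - t, fun i hi => by omega⟩
  exact tendsto_of_tendsto_of_tendsto_of_le_of_le tendsto_const_nhds
    ((ENNReal.tendsto_pow_atTop_nhds_zero_of_lt_one hr1).comp hcard) (fun _ => zero_le)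
    fun i => measure_biInter_ne_le_pow hindep hr _

theorem ae_exists_le_eq (hindep : iIndepFun (fun m ω => (B m ω, B' m ω)) μ)
    {r : ℝ≥0∞} (hr : ∀ m, μ {ω | B m ω ≠ B' m ω} ≤ r) (hr1 : r < 1) (n : ℤ) :
    ∀ᵐ ω ∂μ, ∃ J ≤ n, B' J ω = B J ω := by
  have hnull : μ (⋂ j ≤ n, {ω | B j ω ≠ B' j ω}) = 0 := by
    refine le_antisymm (ge_of_tendsto' (tendsto_measure_biInter_Icc_ne hindep hr hr1 n)
      fun i => measure_mono ?_) zero_le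
    simp_rw [Set.subset_def, Set.mem_iInter, mem_Icc]
    exact fun ω hω j hj => hω j hj.2
  refine measure_mono_null (fun ω hω => ?_) hnull
  simp only [Set.mem_iInter]
  exact fun j hj heq => hω ⟨j, hj, heq.symm⟩

theorem tendsto_eLpNorm_of_abs_le_indicator {ι : Type*} {l : Filter ι} {f : ι → Ω → ℝ}
    {s : ι → Set Ω} {p : ℝ≥0∞} (hp0 : p ≠ 0) (hp : p ≠ ∞)
    (hfs : ∀ i, ∀ᵐ ω ∂μ, |f i ω| ≤ (s i).indicator 1 ω)
    (hs : Tendsto (fun i => μ (s i)) l (𝓝 0)) :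
    Tendsto (fun i => eLpNorm (f i) p μ) l (𝓝 0) := by
  have hexp : 0 < 1 / p.toReal := one_div_pos.2 (ENNReal.toReal_pos hp0 hp)
  have hlim : Tendsto (fun i => μ (s i) ^ (1 / p.toReal)) l (𝓝 0) := by
    have h := ((ENNReal.continuous_rpow_const (y := 1 / p.toReal)).tendsto 0).comp hs
    rwa [ENNReal.zero_rpow_of_pos hexp] at h
  refine tendsto_of_tendsto_of_tendsto_of_le_of_le tendsto_const_nhds hlim (fun _ => zero_le)
    fun i => ?_
  calc eLpNorm (f i) p μ ≤ eLpNorm ((s i).indicator fun _ => (1 : ℝ)) p μ :=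
        eLpNorm_mono_ae <| (hfs i).mono fun ω hω => hω.trans (le_abs_self _)
    _ ≤ ‖(1 : ℝ)‖ₑ * μ (s i) ^ (1 / p.toReal) := eLpNorm_indicator_const_le _ _
    _ = μ (s i) ^ (1 / p.toReal) := by simp

theorem ae_abs_sum_kpzI_sub_kpzK_le_indicator (hB01 : ∀ m ω, B m ω = 0 ∨ B m ω = 1)
    (hB'01 : ∀ m ω, B' m ω = 0 ∨ B' m ω = 1)
    (hindep : iIndepFun (fun m ω => (B m ω, B' m ω)) μ) {r : ℝ≥0∞}
    (hr : ∀ m, μ {ω | B m ω ≠ B' m ω} ≤ r) (hr1 : r < 1) (n i : ℤ) :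
    ∀ᵐ ω ∂μ, |∑ m ∈ Icc i n, kpzI (B · ω) (B' · ω) n m - kpzK (B · ω) (B' · ω) n|
      ≤ (⋂ j ∈ Icc i n, {ω | B j ω ≠ B' j ω}).indicator 1 ω := by
  filter_upwards [ae_exists_le_eq hindep hr hr1 n] with ω ⟨J, hJn, hJ⟩
  by_cases hω : ω ∈ ⋂ j ∈ Icc i n, {ω | B j ω ≠ B' j ω}
  · rw [Set.indicator_of_mem hω, Pi.one_apply]
    exact abs_sum_kpzI_sub_kpzK_le_one (hB01 · ω) (hB'01 · ω) hJn hJ i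
  · simp only [Set.mem_iInter, Set.mem_ofPred_eq, not_forall, not_not] at hω
    obtain ⟨j, hj, hjeq⟩ := hω
    rw [kpzK_eq_sum (mem_Icc.1 hj).2 hjeq.symm (mem_Icc.1 hj).1, sub_self, abs_zero]
    exact Set.indicator_nonneg (fun _ _ => zero_le_one) _

end Probability

theorem kpz_K_series_convergence_general
    {Ω : Type*} [MeasurableSpace Ω] (μ : Measure Ω) [IsProbabilityMeasure μ]
    (B B' : ℤ → Ω → ℝ)
    (hBmeas : ∀ m, Measurable (B m)) (hB'meas : ∀ m, Measurable (B' m))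
    (hB01 : ∀ m ω, B m ω = 0 ∨ B m ω = 1)
    (hB'01 : ∀ m ω, B' m ω = 0 ∨ B' m ω = 1)
    (hindep : iIndepFun
      (fun m ω => (B m ω, B' m ω)) μ)
    (θ : ℝ) (hθ1 : θ < 1)
    (hmom : ∀ m, ∫ ω, |B' m ω - B m ω| ∂μ ≤ θ)
    (n : ℤ) :
    (∀ᵐ ω ∂μ, Summable (fun m : {m : ℤ // m ≤ n} =>
        |(∏ j ∈ Finset.Icc ((m : ℤ) + 1) n, (B' j ω - B j ω)) * B (m : ℤ) ω|)) ∧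
    (∀ k : ℝ, 1 ≤ k →
      Tendsto (fun i : ℤ => eLpNorm (fun ω =>
          (∑ m ∈ Finset.Icc i n, (∏ j ∈ Finset.Icc (m + 1) n, (B' j ω - B j ω)) * B m ω)
          - ∑' m : {m : ℤ // m ≤ n},
              (∏ j ∈ Finset.Icc ((m : ℤ) + 1) n, (B' j ω - B j ω)) * B (m : ℤ) ω)
        (ENNReal.ofReal k) μ) atBot (nhds 0)) ∧
    (∀ᵐ ω ∂μ,
      (∑' m : {m : ℤ // m ≤ n},
          (∏ j ∈ Finset.Icc ((m : ℤ) + 1) n, (B' j ω - B j ω)) * B (m : ℤ) ω) = 0 ∨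
      (∑' m : {m : ℤ // m ≤ n},
          (∏ j ∈ Finset.Icc ((m : ℤ) + 1) n, (B' j ω - B j ω)) * B (m : ℤ) ω) = 1) := by
  have hr : ∀ m, μ {ω | B m ω ≠ B' m ω} ≤ ENNReal.ofReal θ := fun m =>
    measure_ne_le_of_integral_abs_sub_le (hB01 m) (hB'01 m) (hBmeas m) (hB'meas m) (hmom m)
  have hr1 : ENNReal.ofReal θ < 1 := ENNReal.ofReal_lt_one.2 hθ1
  have hagree := ae_exists_le_eq hindep hr hr1 n
  refine ⟨?_, fun k hk => ?_, ?_⟩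
  · filter_upwards [hagree] with ω ⟨J, hJn, hJ⟩
    exact summable_abs_kpzI (b := (B · ω)) (b' := (B' · ω)) hJn hJ
  · exact tendsto_eLpNorm_of_abs_le_indicator (ENNReal.ofReal_pos.2 (by linarith)).ne'
      ENNReal.ofReal_ne_top (ae_abs_sum_kpzI_sub_kpzK_le_indicator hB01 hB'01 hindep hr hr1 n)
      (tendsto_measure_biInter_Icc_ne hindep hr hr1 n)
  · filter_upwards [hagree] with ω ⟨J, hJn, hJ⟩
    have h := sum_kpzI_eq_zero_or_one (hB01 · ω) (hB'01 · ω) J n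
    rwa [← kpzK_eq_sum hJn hJ le_rfl] at h

/-- For mutually independent `{0,1}×{0,1}`-valued pairs `(B_m, B'_m)` with
`E|B'_m − B_m| ≤ θ < 1`, the series `K_n = ∑_{m ≤ n} I(n,m)`, where
`I(n,m) = (∏_{j=m+1}^{n} (B'_j − B_j)) · B_m`, converges absolutely a.s., its partial sums
converge in `L^k` for every `k ≥ 1` as `i → −∞`, and the limit takes values in `{0,1}` a.s. -/
theorem kpz_K_series_convergence
    {Ω : Type*} [MeasurableSpace Ω] (μ : Measure Ω) [IsProbabilityMeasure μ]
    (B B' : ℤ → Ω → ℝ)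
    (hBmeas : ∀ m, Measurable (B m)) (hB'meas : ∀ m, Measurable (B' m))
    (hB01 : ∀ m ω, B m ω = 0 ∨ B m ω = 1)
    (hB'01 : ∀ m ω, B' m ω = 0 ∨ B' m ω = 1)
    (hindep : iIndepFun
      (fun m ω => (B m ω, B' m ω)) μ)
    (θ : ℝ) (hθ0 : 0 ≤ θ) (hθ1 : θ < 1)
    (hmom : ∀ m, ∫ ω, |B' m ω - B m ω| ∂μ ≤ θ)
    (n : ℤ) :
    (∀ᵐ ω ∂μ, Summable (fun m : {m : ℤ // m ≤ n} =>
        |(∏ j ∈ Finset.Icc ((m : ℤ) + 1) n, (B' j ω - B j ω)) * B (m : ℤ) ω|)) ∧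
    (∀ k : ℝ, 1 ≤ k →
      Tendsto (fun i : ℤ => eLpNorm (fun ω =>
          (∑ m ∈ Finset.Icc i n, (∏ j ∈ Finset.Icc (m + 1) n, (B' j ω - B j ω)) * B m ω)
          - ∑' m : {m : ℤ // m ≤ n},
              (∏ j ∈ Finset.Icc ((m : ℤ) + 1) n, (B' j ω - B j ω)) * B (m : ℤ) ω)
        (ENNReal.ofReal k) μ) atBot (nhds 0)) ∧
    (∀ᵐ ω ∂μ,
      (∑' m : {m : ℤ // m ≤ n},
          (∏ j ∈ Finset.Icc ((m : ℤ) + 1) n, (B' j ω - B j ω)) * B (m : ℤ) ω) = 0 ∨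
      (∑' m : {m : ℤ // m ≤ n},
          (∏ j ∈ Finset.Icc ((m : ℤ) + 1) n, (B' j ω - B j ω)) * B (m : ℤ) ω) = 1) :=
  kpz_K_series_convergence_general μ B B' hBmeas hB'meas hB01 hB'01 hindep θ hθ1 hmom n
end

section
/- Fix q ∈ [0,1), ν ∈ [0,1), ᾱ > 0 and ρ ∈ (0,1), and let f be the tilted step distribution with parameters (q, ᾱ, ν, ρ). Set γ = (1−ρ)/(1−νρ), A = ᾱγ/(1+ᾱγ), A_q = qᾱγ/(1+qᾱγ), b = γ/(1−γ) and b' = νγ/(1−νγ). Then b − b' > 0 and the mean of f satisfies Σ_{n∈ℕ} n·f(n) = (A − A_q)/(b − b'). -/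
/-- The step distribution with parameters `(q, ᾱ, ν)`:
`p(0) = 1 − ᾱ(1−q)/(1+ᾱ)` and
`p(n) = (ᾱ(1−q)(1−ν)/(1+ᾱ)²)·((ν+ᾱ)/(1+ᾱ))^{n−1}` for `n ≥ 1`. -/
noncomputable def stepDist (q a ν : ℝ) : ℕ → ℝ := fun n =>
  if n = 0 then 1 - a * (1 - q) / (1 + a)
  else (a * (1 - q) * (1 - ν) / (1 + a) ^ 2) * ((ν + a) / (1 + a)) ^ (n - 1)

/-- The tilted step distribution with parameters `(q, ᾱ, ν, ρ)`:
`f(n) = λ ρ^n p(n)` where `γ = (1−ρ)/(1−νρ)` and `λ = (1+ᾱγ)/(1+qᾱγ)`. -/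
noncomputable def tiltedStepDist (q a ν ρ : ℝ) : ℕ → ℝ := fun n =>
  ((1 + a * ((1 - ρ) / (1 - ν * ρ))) / (1 + q * a * ((1 - ρ) / (1 - ν * ρ)))) *
    ρ ^ n * stepDist q a ν n

/-! For `n ≥ 1` the tilted weights are `λ c ρⁿ rⁿ⁻¹` with `r = (ν + ᾱ)/(1 + ᾱ)`, so the mean is
`λ c ρ / (1 - ρ r)²` by the differentiated geometric series. The map `t ↦ (1 - t)/(1 - ν t)` is an
involution, so `ρ = (1 - γ)/(1 - ν γ)`; in terms of `γ` one has
`1 - ρ r = (1 - ν)(1 + ᾱγ)/((1 - νγ)(1 + ᾱ))`, and both sides of the identity become the same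
rational function of `γ`. -/

lemma hasSum_coe_mul_pow_mul_pow_pred {𝕜 : Type*} [NormedField 𝕜] [CompleteSpace 𝕜] {ρ r : 𝕜}
    (h : ‖ρ * r‖ < 1) :
    HasSum (fun n : ℕ ↦ (n : 𝕜) * (ρ ^ n * r ^ (n - 1))) (ρ / (1 - ρ * r) ^ 2) := by
  have hshift : HasSum (fun n : ℕ ↦ ρ * ((n + 1 : 𝕜) * (ρ * r) ^ n)) (ρ / (1 - ρ * r) ^ 2) := by
    simpa [div_eq_mul_inv] using (hasSum_choose_mul_geometric_of_norm_lt_one 1 h).mul_left ρ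
  rw [← hasSum_nat_add_iff' 1]
  simpa using hshift.congr_fun fun n ↦ by ring

lemma stepDist_succ (q a ν : ℝ) (n : ℕ) :
    stepDist q a ν (n + 1) = a * (1 - q) * (1 - ν) / (1 + a) ^ 2 * ((ν + a) / (1 + a)) ^ n := by
  simp [stepDist]

lemma hasSum_coe_mul_pow_mul_stepDist (q a ν ρ : ℝ) (h : |ρ * ((ν + a) / (1 + a))| < 1) :
    HasSum (fun n : ℕ ↦ n * (ρ ^ n * stepDist q a ν n))
      (a * (1 - q) * (1 - ν) / (1 + a) ^ 2 * (ρ / (1 - ρ * ((ν + a) / (1 + a))) ^ 2)) := by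
  refine ((hasSum_coe_mul_pow_mul_pow_pred (𝕜 := ℝ) (by rwa [Real.norm_eq_abs])).mul_left
    (a * (1 - q) * (1 - ν) / (1 + a) ^ 2)).congr_fun fun n ↦ ?_
  rcases n with _ | n
  · simp
  · rw [stepDist_succ, Nat.add_sub_cancel]
    ring

lemma hasSum_coe_mul_tiltedStepDist (q a ν ρ : ℝ) (h : |ρ * ((ν + a) / (1 + a))| < 1) :
    HasSum (fun n : ℕ ↦ n * tiltedStepDist q a ν ρ n)
      ((1 + a * ((1 - ρ) / (1 - ν * ρ))) / (1 + q * a * ((1 - ρ) / (1 - ν * ρ))) *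
        (a * (1 - q) * (1 - ν) / (1 + a) ^ 2 * (ρ / (1 - ρ * ((ν + a) / (1 + a))) ^ 2))) :=
  ((hasSum_coe_mul_pow_mul_stepDist q a ν ρ h).mul_left _).congr_fun fun n ↦ by
    simp only [tiltedStepDist]
    ring

lemma one_sub_div_one_sub_mul_mem_Ioo {ν ρ : ℝ} (hν : ν < 1) (hρ0 : 0 < ρ) (hρ1 : ρ < 1) :
    (1 - ρ) / (1 - ν * ρ) ∈ Set.Ioo 0 1 := by
  have hνρ : 0 < 1 - ν * ρ := by nlinarith
  exact ⟨div_pos (by linarith) hνρ, (div_lt_one hνρ).2 (by nlinarith)⟩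

lemma eq_one_sub_div_one_sub_mul_symm {ν ρ γ : ℝ} (hρ : 1 - ν * ρ ≠ 0) (hγ' : 1 - ν * γ ≠ 0)
    (hγ : γ = (1 - ρ) / (1 - ν * ρ)) : ρ = (1 - γ) / (1 - ν * γ) := by
  rw [eq_div_iff hγ']
  rw [eq_div_iff hρ] at hγ
  linear_combination hγ

lemma div_one_sub_sub_div_one_sub {K : Type*} [Field K] {s t : K} (hs : 1 - s ≠ 0)
    (ht : 1 - t ≠ 0) : t / (1 - t) - s / (1 - s) = (t - s) / ((1 - t) * (1 - s)) := by
  field_simp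
  ring

lemma div_one_add_sub_div_one_add {K : Type*} [Field K] {s t : K} (hs : 1 + s ≠ 0)
    (ht : 1 + t ≠ 0) : t / (1 + t) - s / (1 + s) = (t - s) / ((1 + t) * (1 + s)) := by
  field_simp
  ring

theorem tiltedStepDist_mean_general (q ν a ρ γ A Aq b b' : ℝ)
    (hq0 : 0 ≤ q) (hν0 : 0 ≤ ν) (hν1 : ν < 1) (ha : 0 < a)
    (hρ0 : 0 < ρ) (hρ1 : ρ < 1)
    (hγ : γ = (1 - ρ) / (1 - ν * ρ))
    (hA : A = a * γ / (1 + a * γ)) (hAq : Aq = q * a * γ / (1 + q * a * γ))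
    (hb : b = γ / (1 - γ)) (hb' : b' = ν * γ / (1 - ν * γ)) :
    0 < b - b' ∧
    (∑' n : ℕ, (n : ℝ) * tiltedStepDist q a ν ρ n) = (A - Aq) / (b - b') := by
  have hνρ : 0 < 1 - ν * ρ := by nlinarith
  obtain ⟨hγ0, hγ1⟩ := hγ ▸ one_sub_div_one_sub_mul_mem_Ioo hν1 hρ0 hρ1
  have hνγ : 0 < 1 - ν * γ := by nlinarith
  have hbb' : b - b' = γ * (1 - ν) / ((1 - γ) * (1 - ν * γ)) := by
    rw [hb, hb', div_one_sub_sub_div_one_sub hνγ.ne' (by linarith)]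
    ring
  refine ⟨hbb' ▸ div_pos (by nlinarith) (by nlinarith), ?_⟩
  have hAAq : A - Aq = a * γ * (1 - q) / ((1 + a * γ) * (1 + q * a * γ)) := by
    rw [hA, hAq, div_one_add_sub_div_one_add (by positivity) (by positivity)]
    ring
  have hratio : |ρ * ((ν + a) / (1 + a))| < 1 := by
    rw [abs_of_nonneg (by positivity), ← mul_div_assoc, div_lt_one (by positivity)]
    nlinarith
  have hρ := eq_one_sub_div_one_sub_mul_symm hνρ.ne' hνγ.ne' hγ
  have hgap : 1 - ρ * ((ν + a) / (1 + a)) = (1 - ν) * (1 + a * γ) / ((1 - ν * γ) * (1 + a)) := by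
    rw [hρ, div_mul_div_comm, one_sub_div (by positivity)]
    ring
  rw [(hasSum_coe_mul_tiltedStepDist q a ν ρ hratio).tsum_eq, ← hγ, hbb', hAAq, hgap, hρ]
  field_simp

/-- With `γ = (1−ρ)/(1−νρ)`, `A = ᾱγ/(1+ᾱγ)`, `A_q = qᾱγ/(1+qᾱγ)`,
`b = γ/(1−γ)`, `b' = νγ/(1−νγ)`, one has `b − b' > 0` and the mean of the tilted step
distribution equals `(A − A_q)/(b − b')`. -/
theorem tiltedStepDist_mean (q ν a ρ γ A Aq b b' : ℝ)
    (hq0 : 0 ≤ q) (hq1 : q < 1) (hν0 : 0 ≤ ν) (hν1 : ν < 1) (ha : 0 < a)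
    (hρ0 : 0 < ρ) (hρ1 : ρ < 1)
    (hγ : γ = (1 - ρ) / (1 - ν * ρ))
    (hA : A = a * γ / (1 + a * γ)) (hAq : Aq = q * a * γ / (1 + q * a * γ))
    (hb : b = γ / (1 - γ)) (hb' : b' = ν * γ / (1 - ν * γ)) :
    0 < b - b' ∧
    (∑' n : ℕ, (n : ℝ) * tiltedStepDist q a ν ρ n) = (A - Aq) / (b - b') :=
  tiltedStepDist_mean_general q ν a ρ γ A Aq b b' hq0 hν0 hν1 ha hρ0 hρ1 hγ hA hAq hb hb'
end

section
/- Fix ν ∈ [0,1), α > 0, ρ ∈ (0,1) and J ∈ ℤ_{>0}. For every u > 0 and T > 0 there exist constants C < ∞ and ε₀ ∈ (0,1] such that for every ε ∈ (0,ε₀] and every t ∈ ℕ with t ≤ ε^{−3}T, the t-fold convolution P_ε^t of the time-inhomogeneous tilted step distributions satisfies Σ_{n∈ℕ} P_ε^t(n) · e^{u ε |n − M_ε(t)|} ≤ C, where M_ε(t) = Σ_{n∈ℕ} n·P_ε^t(n) is the mean of P_ε^t. -/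
/-- Convolution of two mass functions on `ℕ`: `(g*h)(n) = ∑_{m=0}^{n} g(m) h(n−m)`. -/
noncomputable def pmfConv (g h : ℕ → ℝ) : ℕ → ℝ := fun n =>
  ∑ m ∈ Finset.range (n + 1), g m * h (n - m)

/-- The `t`-fold convolution `P_ε^t = f_ε^{(0)} * ⋯ * f_ε^{(t−1)}` of the
time-inhomogeneous tilted step distributions, where `f_ε^{(s)}` is the tilted step
distribution with parameters `(e^{−ε}, α e^{−ε·(s mod J)}, ν, ρ)`. -/
noncomputable def tiltedConvIter (ν α ρ ε : ℝ) (J : ℕ) : ℕ → ℕ → ℝ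
  | 0 => fun n => if n = 0 then 1 else 0
  | t + 1 => pmfConv (tiltedConvIter ν α ρ ε J t)
      (tiltedStepDist (Real.exp (-ε)) (α * Real.exp (-ε * ((t % J : ℕ) : ℝ))) ν ρ)

/-!
Each tilted step law `f` has generating function `∑ f(n) xⁿ = 1 + β (x - 1) / (1 - η x)`, with
`β = 1 - f(0) ≤ ᾱ (1 - q) = O(ε)` and a geometric ratio `η` bounded away from `1` uniformly in
time. For `x = e^θ` this gives `F(x) F(1/x) ≤ exp (O(ε θ²))`, so the two-sided moment generating
functions `G, G'` of `P_ε^t` at `±θ`, being products over the steps, satisfy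
`G G' ≤ exp (O(t ε θ²))`, which stays bounded for `θ = uε` and `t ≤ T ε⁻³`. Finally Jensen gives
`e^{±θM} ≤ G, G'`, hence `∑ P(n) e^{θ|n - M|} ≤ e^{-θM} G + e^{θM} G' ≤ 2 G G'`.
-/

open Real

theorem tsum_mul_exp_abs_sub_mean_le {ι : Type*} {P X : ι → ℝ} {θ G G' : ℝ} (hθ : 0 < θ)
    (hP : ∀ i, 0 ≤ P i) (hP1 : HasSum P 1)
    (hG : HasSum (fun i => P i * exp (θ * X i)) G)
    (hG' : HasSum (fun i => P i * exp (-θ * X i)) G') :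
    Summable (fun i => P i * exp (θ * |X i - ∑' j, X j * P j|)) ∧
      ∑' i, P i * exp (θ * |X i - ∑' j, X j * P j|) ≤ 2 * G * G' := by
  set M := ∑' j, X j * P j
  have hXP : HasSum (fun i => X i * P i) M := by
    refine (Summable.of_norm_bounded ((hG.add hG').summable.div_const θ) fun i => ?_).hasSum
    have h := exp_abs_le (θ * X i)
    rw [abs_mul, abs_of_pos hθ] at h
    have h' : θ * |X i| ≤ exp (θ * X i) + exp (-θ * X i) := by
      rw [neg_mul]; linarith [add_one_le_exp (θ * |X i|)]
    rw [Real.norm_eq_abs, abs_mul, abs_of_nonneg (hP i), le_div_iff₀ hθ]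
    nlinarith [mul_le_mul_of_nonneg_left h' (hP i)]
  -- Jensen's inequality for `exp`, from its tangent line at `c * M`.
  have jensen : ∀ {c g : ℝ}, HasSum (fun i => P i * exp (c * X i)) g → exp (c * M) ≤ g := by
    intro c g hg
    have hline : HasSum (fun i => exp (c * M) * ((1 - c * M) * P i + c * (X i * P i)))
        (exp (c * M)) := by
      simpa using ((hP1.mul_left (1 - c * M)).add (hXP.mul_left c)).mul_left (exp (c * M))
    refine hasSum_le (fun i => ?_) hline hg
    have h := add_one_le_exp (c * X i - c * M)
    rw [show c * X i = c * M + (c * X i - c * M) by ring, exp_add]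
    nlinarith [mul_le_mul_of_nonneg_left h (mul_nonneg (hP i) (exp_pos (c * M)).le)]
  have hbound : HasSum (fun i => exp (-θ * M) * (P i * exp (θ * X i)) +
      exp (θ * M) * (P i * exp (-θ * X i))) (exp (-θ * M) * G + exp (θ * M) * G') :=
    (hG.mul_left _).add (hG'.mul_left _)
  have hpoint : ∀ i, P i * exp (θ * |X i - M|) ≤ exp (-θ * M) * (P i * exp (θ * X i)) +
      exp (θ * M) * (P i * exp (-θ * X i)) := fun i => by
    have h := exp_abs_le (θ * (X i - M))
    rw [abs_mul, abs_of_pos hθ] at h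
    have e₁ : exp (θ * (X i - M)) = exp (-θ * M) * exp (θ * X i) := by rw [← exp_add]; ring_nf
    have e₂ : exp (-(θ * (X i - M))) = exp (θ * M) * exp (-θ * X i) := by rw [← exp_add]; ring_nf
    calc P i * exp (θ * |X i - M|) ≤ P i * (exp (θ * (X i - M)) + exp (-(θ * (X i - M)))) :=
          mul_le_mul_of_nonneg_left h (hP i)
      _ = _ := by rw [e₁, e₂]; ring
  have hsum : Summable (fun i => P i * exp (θ * |X i - M|)) :=
    .of_nonneg_of_le (fun i => mul_nonneg (hP i) (exp_pos _).le) hpoint hbound.summable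
  refine ⟨hsum, (hasSum_le hpoint hsum.hasSum hbound).trans ?_⟩
  have hG0 : 0 ≤ G := hG.nonneg fun i => mul_nonneg (hP i) (exp_pos _).le
  have hG'0 : 0 ≤ G' := hG'.nonneg fun i => mul_nonneg (hP i) (exp_pos _).le
  nlinarith [mul_le_mul_of_nonneg_right (jensen hG') hG0,
    mul_le_mul_of_nonneg_right (jensen hG) hG'0]

lemma add_inv_sub_two_nonneg {x : ℝ} (hx : 0 < x) : 0 ≤ x + x⁻¹ - 2 := by
  rw [show x + x⁻¹ - 2 = (x - 1) ^ 2 / x by field_simp; ring]; positivity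

-- The generating function of the law with mass `1 - β` at `0` and tail `∝ ηⁿ`.
noncomputable def geomGenFun (β η x : ℝ) : ℝ := 1 + β * (x - 1) / (1 - η * x)

lemma geomGenFun_mul_geomGenFun_inv_le {β η x δ : ℝ} (hβ : 0 ≤ β) (hη : 0 ≤ η) (hx : 1 ≤ x)
    (hδ : 0 < δ) (hδx : δ ≤ 1 - η * x) :
    geomGenFun β η x * geomGenFun β η x⁻¹ ≤ exp (2 * β * (x + x⁻¹ - 2) / δ ^ 2) := by
  have hx0 : 0 < x := by linarith
  have hxinv : x⁻¹ ≤ x := (inv_le_one_of_one_le₀ hx).trans hx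
  have hδx' : δ ≤ 1 - η * x⁻¹ := hδx.trans (by nlinarith)
  have hη1 : 1 + η ≤ 2 := by nlinarith
  have hs := add_inv_sub_two_nonneg hx0
  set u₁ := (x - 1) / (1 - η * x)
  set u₂ := (x⁻¹ - 1) / (1 - η * x⁻¹)
  have hu₁ : 0 ≤ u₁ := div_nonneg (by linarith) (by linarith)
  have hu₂ : u₂ ≤ 0 := div_nonpos_of_nonpos_of_nonneg (by linarith [inv_le_one_of_one_le₀ hx])
    (by linarith)
  have hu : u₁ + u₂ = (1 + η) * (x + x⁻¹ - 2) / ((1 - η * x) * (1 - η * x⁻¹)) := by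
    rw [div_add_div _ _ (by linarith) (by linarith)]
    congr 1
    field_simp
    ring
  have hu_le : u₁ + u₂ ≤ 2 * (x + x⁻¹ - 2) / δ ^ 2 := by
    rw [hu, sq]
    exact div_le_div₀ (by positivity) (by gcongr) (by positivity)
      (mul_le_mul hδx hδx' hδ.le (by linarith))
  calc geomGenFun β η x * geomGenFun β η x⁻¹
      = 1 + β * (u₁ + u₂) + β ^ 2 * (u₁ * u₂) := by
        simp only [geomGenFun, mul_div_assoc]; ring
    _ ≤ 1 + β * (u₁ + u₂) := by nlinarith [mul_nonpos_of_nonneg_of_nonpos hu₁ hu₂]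
    _ ≤ exp (β * (u₁ + u₂)) := by linarith [add_one_le_exp (β * (u₁ + u₂))]
    _ ≤ exp (2 * β * (x + x⁻¹ - 2) / δ ^ 2) := by
        gcongr
        calc β * (u₁ + u₂) ≤ β * (2 * (x + x⁻¹ - 2) / δ ^ 2) := by gcongr
          _ = _ := by ring

lemma exp_add_exp_neg_sub_two_le {θ : ℝ} (hθ : 0 ≤ θ) :
    exp θ + exp (-θ) - 2 ≤ θ ^ 2 * exp θ := by
  have h₁ : exp θ - 1 ≤ θ * exp θ := by
    nlinarith [add_one_le_exp (-θ), exp_pos θ, exp_neg θ, mul_inv_cancel₀ (exp_pos θ).ne']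
  have h₂ : exp θ + exp (-θ) - 2 = (exp θ - 1) ^ 2 * exp (-θ) := by
    rw [exp_neg]; field_simp; ring
  rw [h₂]
  calc (exp θ - 1) ^ 2 * exp (-θ) ≤ (θ * exp θ) ^ 2 * exp (-θ) := by
        gcongr
        linarith [add_one_le_exp θ]
    _ = θ ^ 2 * exp θ := by
        rw [mul_pow, sq (exp θ), mul_assoc, mul_assoc, ← exp_add]; simp

noncomputable def tiltedRatio (a ν ρ : ℝ) : ℝ := ρ * ((ν + a) / (1 + a))

section TiltedStep

variable {q a ν ρ : ℝ}

lemma tiltedRatio_nonneg (ha : 0 ≤ a) (hν : 0 ≤ ν) (hρ : 0 ≤ ρ) : 0 ≤ tiltedRatio a ν ρ := by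
  unfold tiltedRatio; positivity

lemma tiltedRatio_lt_one (ha : 0 ≤ a) (hν0 : 0 ≤ ν) (hν1 : ν < 1) (hρ1 : ρ ≤ 1) :
    tiltedRatio a ν ρ < 1 := by
  have h0 : 0 ≤ (ν + a) / (1 + a) := by positivity
  have h1 : (ν + a) / (1 + a) < 1 := (div_lt_one (by linarith)).2 (by linarith)
  unfold tiltedRatio; nlinarith

lemma tiltedRatio_mono {b : ℝ} (ha : 0 ≤ a) (hab : a ≤ b) (hν : ν ≤ 1) (hρ : 0 ≤ ρ) :
    tiltedRatio a ν ρ ≤ tiltedRatio b ν ρ := by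
  refine mul_le_mul_of_nonneg_left ?_ hρ
  rw [div_le_div_iff₀ (by linarith) (by linarith)]
  nlinarith

lemma tiltedStepDist_nonneg (hq0 : 0 ≤ q) (hq1 : q ≤ 1) (ha : 0 ≤ a) (hν0 : 0 ≤ ν) (hν1 : ν < 1)
    (hρ0 : 0 ≤ ρ) (hρ1 : ρ ≤ 1) (n : ℕ) : 0 ≤ tiltedStepDist q a ν ρ n := by
  have hνρ : ν * ρ < 1 := by nlinarith
  have hγ : 0 ≤ (1 - ρ) / (1 - ν * ρ) := div_nonneg (by linarith) (by linarith)
  have hp : 0 ≤ stepDist q a ν n := by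
    unfold stepDist
    split_ifs
    · rw [sub_nonneg, div_le_one (by linarith)]; nlinarith
    · have : 0 ≤ 1 - q := by linarith
      have : 0 ≤ 1 - ν := by linarith
      positivity
  unfold tiltedStepDist
  positivity

lemma tiltedStepDist_succ (q a ν ρ : ℝ) (k : ℕ) :
    tiltedStepDist q a ν ρ (k + 1) = tiltedStepDist q a ν ρ 1 * tiltedRatio a ν ρ ^ k := by
  simp only [tiltedStepDist, stepDist, tiltedRatio, add_eq_zero, one_ne_zero, and_false,
    if_false, Nat.add_sub_cancel, Nat.sub_self, pow_zero, pow_succ, mul_pow]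
  ring

-- Total mass one, `f 0 + f 1 / (1 - η) = 1`: this is what the tilt constant `λ` is chosen for.
lemma tiltedStepDist_one (hq : 0 ≤ q) (ha : 0 ≤ a) (hν0 : 0 ≤ ν) (hν1 : ν < 1)
    (hρ1 : ρ ≤ 1) :
    tiltedStepDist q a ν ρ 1 = (1 - tiltedStepDist q a ν ρ 0) * (1 - tiltedRatio a ν ρ) := by
  have hνρ : 0 < 1 - ν * ρ := by nlinarith
  simp only [tiltedStepDist, stepDist, tiltedRatio, one_ne_zero, if_false, if_true,
    Nat.sub_self, pow_zero, pow_one]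
  set γ := (1 - ρ) / (1 - ν * ρ)
  have hγ : γ * (1 - ν * ρ) = 1 - ρ := div_mul_cancel₀ _ hνρ.ne'
  have hγ0 : 0 ≤ γ := div_nonneg (by linarith) hνρ.le
  have hlam : 0 < 1 + q * a * γ := by positivity
  have h1a : 0 < 1 + a := by linarith
  clear_value γ
  field_simp
  linear_combination a * (1 + a) * (1 - q) * hγ

lemma one_sub_tiltedStepDist_zero_le (hq0 : 0 ≤ q) (hq1 : q ≤ 1) (ha : 0 ≤ a) (hν0 : 0 ≤ ν)
    (hν1 : ν < 1) (hρ1 : ρ ≤ 1) :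
    1 - tiltedStepDist q a ν ρ 0 ≤ a * (1 - q) := by
  have hνρ : 0 < 1 - ν * ρ := by nlinarith
  have hγ : 0 ≤ (1 - ρ) / (1 - ν * ρ) := div_nonneg (by linarith) hνρ.le
  have hlam : 1 ≤ (1 + a * ((1 - ρ) / (1 - ν * ρ))) / (1 + q * a * ((1 - ρ) / (1 - ν * ρ))) := by
    rw [one_le_div (by positivity)]
    nlinarith [mul_nonneg ha hγ]
  have hp : a * (1 - q) / (1 + a) ≤ a * (1 - q) :=
    div_le_self (by nlinarith) (by linarith)
  have hp0 : 0 ≤ 1 - a * (1 - q) / (1 + a) := by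
    rw [sub_nonneg, div_le_one (by linarith)]; nlinarith
  simp only [tiltedStepDist, stepDist, if_true, pow_zero, mul_one]
  nlinarith

lemma hasSum_tiltedStepDist_mul_pow (hq : 0 ≤ q) (ha : 0 ≤ a) (hν0 : 0 ≤ ν) (hν1 : ν < 1)
    (hρ1 : ρ ≤ 1) {x : ℝ} (hx : |tiltedRatio a ν ρ * x| < 1) :
    HasSum (fun n => tiltedStepDist q a ν ρ n * x ^ n)
      (geomGenFun (1 - tiltedStepDist q a ν ρ 0) (tiltedRatio a ν ρ) x) := by
  have hηx : 1 - tiltedRatio a ν ρ * x ≠ 0 := by linarith [le_abs_self (tiltedRatio a ν ρ * x)]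
  have htail : (fun n => tiltedStepDist q a ν ρ (n + 1) * x ^ (n + 1)) =
      fun n => tiltedStepDist q a ν ρ 1 * x * (tiltedRatio a ν ρ * x) ^ n := by
    funext n
    rw [tiltedStepDist_succ, pow_succ, mul_pow]; ring
  have hvalue : geomGenFun (1 - tiltedStepDist q a ν ρ 0) (tiltedRatio a ν ρ) x -
      ∑ i ∈ Finset.range 1, tiltedStepDist q a ν ρ i * x ^ i =
      tiltedStepDist q a ν ρ 1 * x * (1 - tiltedRatio a ν ρ * x)⁻¹ := by
    rw [geomGenFun, tiltedStepDist_one hq ha hν0 hν1 hρ1, Finset.sum_range_one, pow_zero, mul_one,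
      ← div_eq_mul_inv, eq_div_iff hηx, sub_mul, add_mul, div_mul_cancel₀ _ hηx]
    ring
  refine (hasSum_nat_add_iff' 1).1 ?_
  rw [htail, hvalue]
  exact (hasSum_geometric_of_abs_lt_one hx).mul_left _

lemma hasSum_tiltedStepDist (hq : 0 ≤ q) (ha : 0 ≤ a) (hν0 : 0 ≤ ν) (hν1 : ν < 1)
    (hρ0 : 0 ≤ ρ) (hρ1 : ρ ≤ 1) : HasSum (tiltedStepDist q a ν ρ) 1 := by
  have hη : |tiltedRatio a ν ρ * 1| < 1 := by
    rw [mul_one, abs_of_nonneg (tiltedRatio_nonneg ha hν0 hρ0)]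
    exact tiltedRatio_lt_one ha hν0 hν1 hρ1
  simpa [geomGenFun] using hasSum_tiltedStepDist_mul_pow hq ha hν0 hν1 hρ1 hη

lemma tiltedStepDist_genFun_mul_genFun_inv_le (hq0 : 0 ≤ q) (hq1 : q ≤ 1) (ha : 0 ≤ a)
    (hν0 : 0 ≤ ν) (hν1 : ν < 1) (hρ0 : 0 ≤ ρ) (hρ1 : ρ ≤ 1) {x δ : ℝ} (hx : 1 ≤ x) (hδ : 0 < δ)
    (hδx : δ ≤ 1 - tiltedRatio a ν ρ * x) :
    ∃ F F', HasSum (fun n => tiltedStepDist q a ν ρ n * x ^ n) F ∧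
      HasSum (fun n => tiltedStepDist q a ν ρ n * x⁻¹ ^ n) F' ∧
      0 ≤ F * F' ∧ F * F' ≤ exp (2 * (a * (1 - q)) * (x + x⁻¹ - 2) / δ ^ 2) := by
  have hf := tiltedStepDist_nonneg hq0 hq1 ha hν0 hν1 hρ0 hρ1
  have hη := tiltedRatio_nonneg ha hν0 hρ0
  have hηx : tiltedRatio a ν ρ * x⁻¹ ≤ tiltedRatio a ν ρ * x :=
    mul_le_mul_of_nonneg_left ((inv_le_one_of_one_le₀ hx).trans hx) hη
  have hF := hasSum_tiltedStepDist_mul_pow hq0 ha hν0 hν1 hρ1 (x := x)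
    (by rw [abs_lt]; constructor <;> nlinarith)
  have hF' := hasSum_tiltedStepDist_mul_pow hq0 ha hν0 hν1 hρ1 (x := x⁻¹)
    (by rw [abs_lt]; constructor <;> nlinarith [inv_pos.2 (by linarith : (0 : ℝ) < x)])
  have hβ : 0 ≤ 1 - tiltedStepDist q a ν ρ 0 :=
    sub_nonneg.2 (le_hasSum (hasSum_tiltedStepDist hq0 ha hν0 hν1 hρ0 hρ1) 0 fun n _ => hf n)
  refine ⟨_, _, hF, hF', mul_nonneg (hF.nonneg fun n => ?_) (hF'.nonneg fun n => ?_), ?_⟩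
  · exact mul_nonneg (hf n) (by positivity)
  · exact mul_nonneg (hf n) (pow_nonneg (inv_nonneg.2 (by linarith)) n)
  refine (geomGenFun_mul_geomGenFun_inv_le hβ hη hx hδ hδx).trans (exp_le_exp.2 ?_)
  have hs := add_inv_sub_two_nonneg (by linarith : 0 < x)
  gcongr
  exact one_sub_tiltedStepDist_zero_le hq0 hq1 ha hν0 hν1 hρ1

end TiltedStep

lemma hasSum_pmfConv_mul_pow {g h : ℕ → ℝ} {x a b : ℝ} (hg : HasSum (fun n => g n * x ^ n) a)
    (hh : HasSum (fun n => h n * x ^ n) b) :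
    HasSum (fun n => pmfConv g h n * x ^ n) (a * b) := by
  have hg' := summable_norm_iff.2 hg.summable
  have hh' := summable_norm_iff.2 hh.summable
  have hterm : ∀ n, ∑ k ∈ Finset.range (n + 1), g k * x ^ k * (h (n - k) * x ^ (n - k)) =
      pmfConv g h n * x ^ n := fun n => by
    rw [pmfConv, Finset.sum_mul]
    refine Finset.sum_congr rfl fun k hk => ?_
    rw [show x ^ n = x ^ k * x ^ (n - k) by
      rw [← pow_add, Nat.add_sub_cancel' (Finset.mem_range_succ_iff.1 hk)]]
    ring
  have hprod := hasSum_sum_range_mul_of_summable_norm hg' hh'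
  rwa [hg.tsum_eq, hh.tsum_eq, funext hterm] at hprod

lemma mul_exp_neg_mul_mem_Icc {α ε r : ℝ} (hα : 0 ≤ α) (hε : 0 ≤ ε) (hr : 0 ≤ r) :
    α * exp (-ε * r) ∈ Set.Icc 0 α :=
  ⟨by positivity, mul_le_of_le_one_right hα (exp_le_one_iff.2 (by nlinarith))⟩

noncomputable def tiltedStepAt (ν α ρ ε : ℝ) (J s : ℕ) : ℕ → ℝ :=
  tiltedStepDist (exp (-ε)) (α * exp (-ε * ((s % J : ℕ) : ℝ))) ν ρ

section TiltedConvIter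

variable {ν α ρ ε : ℝ} {J : ℕ}

lemma hasSum_tiltedConvIter_mul_pow {x : ℝ} {F : ℕ → ℝ}
    (hF : ∀ s, HasSum (fun n => tiltedStepAt ν α ρ ε J s n * x ^ n) (F s)) (t : ℕ) :
    HasSum (fun n => tiltedConvIter ν α ρ ε J t n * x ^ n) (∏ s ∈ Finset.range t, F s) := by
  induction t with
  | zero =>
    have hP₀ : (fun n => tiltedConvIter ν α ρ ε J 0 n * x ^ n) =
        fun n => if n = 0 then 1 else 0 := by
      funext n
      rw [tiltedConvIter]
      split_ifs with hn <;> simp [hn]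
    rw [hP₀]
    exact hasSum_ite_eq 0 1
  | succ t ih =>
    rw [Finset.prod_range_succ]
    exact hasSum_pmfConv_mul_pow ih (hF t)

lemma tiltedConvIter_nonneg (hν0 : 0 ≤ ν) (hν1 : ν < 1) (hα : 0 ≤ α) (hρ0 : 0 ≤ ρ) (hρ1 : ρ ≤ 1)
    (hε : 0 ≤ ε) (t n : ℕ) : 0 ≤ tiltedConvIter ν α ρ ε J t n := by
  induction t generalizing n with
  | zero => show 0 ≤ ite _ _ _; split_ifs <;> norm_num
  | succ t ih =>
    refine (Finset.sum_nonneg ?_ : 0 ≤ pmfConv _ _ n)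
    refine fun m _ => mul_nonneg (ih m) (tiltedStepDist_nonneg (exp_pos _).le
      (exp_le_one_iff.2 (by linarith)) ?_ hν0 hν1 hρ0 hρ1 _)
    exact (mul_exp_neg_mul_mem_Icc hα hε (Nat.cast_nonneg _)).1

lemma hasSum_tiltedConvIter (hν0 : 0 ≤ ν) (hν1 : ν < 1) (hα : 0 ≤ α) (hρ0 : 0 ≤ ρ) (hρ1 : ρ ≤ 1)
    (hε : 0 ≤ ε) (t : ℕ) : HasSum (tiltedConvIter ν α ρ ε J t) 1 := by
  have hstep : ∀ s, HasSum (fun n => tiltedStepAt ν α ρ ε J s n * 1 ^ n) 1 := fun s => by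
    simp only [one_pow, mul_one]
    exact hasSum_tiltedStepDist (exp_pos _).le
      (mul_exp_neg_mul_mem_Icc hα hε (Nat.cast_nonneg _)).1 hν0 hν1 hρ0 hρ1
  simpa using hasSum_tiltedConvIter_mul_pow hstep t

lemma tiltedConvIter_genFun_mul_genFun_inv_le (hν0 : 0 ≤ ν) (hν1 : ν < 1) (hα : 0 ≤ α)
    (hρ0 : 0 ≤ ρ) (hρ1 : ρ ≤ 1) (hε : 0 ≤ ε) {x δ : ℝ} (hx : 1 ≤ x) (hδ : 0 < δ)
    (hδx : δ ≤ 1 - tiltedRatio α ν ρ * x) (t : ℕ) :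
    ∃ G G', HasSum (fun n => tiltedConvIter ν α ρ ε J t n * x ^ n) G ∧
      HasSum (fun n => tiltedConvIter ν α ρ ε J t n * x⁻¹ ^ n) G' ∧
      G * G' ≤ exp (2 * (α * ε) * (x + x⁻¹ - 2) / δ ^ 2) ^ t := by
  have hq0 : 0 ≤ exp (-ε) := (exp_pos _).le
  have hq : 1 - ε ≤ exp (-ε) := by linarith [add_one_le_exp (-ε)]
  have hs := add_inv_sub_two_nonneg (by linarith : 0 < x)
  have hstep : ∀ s : ℕ, ∃ F F',
      HasSum (fun n => tiltedStepAt ν α ρ ε J s n * x ^ n) F ∧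
      HasSum (fun n => tiltedStepAt ν α ρ ε J s n * x⁻¹ ^ n) F' ∧
      0 ≤ F * F' ∧ F * F' ≤ exp (2 * (α * ε) * (x + x⁻¹ - 2) / δ ^ 2) := fun s => by
    obtain ⟨ha0, haα⟩ := mul_exp_neg_mul_mem_Icc hα hε (Nat.cast_nonneg (s % J))
    have hη := tiltedRatio_mono ha0 haα hν1.le hρ0
    obtain ⟨F, F', hF, hF', h0, hle⟩ := tiltedStepDist_genFun_mul_genFun_inv_le hq0
      (exp_le_one_iff.2 (by linarith)) ha0 hν0 hν1 hρ0 hρ1 hx hδ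
      (hδx.trans (by gcongr))
    have hdecay : α * exp (-ε * ((s % J : ℕ) : ℝ)) * (1 - exp (-ε)) ≤ α * ε :=
      mul_le_mul haα (by linarith) (sub_nonneg.2 (exp_le_one_iff.2 (by linarith))) hα
    refine ⟨F, F', hF, hF', h0, hle.trans (exp_le_exp.2 (by gcongr))⟩
  choose F F' hF hF' h0 hle using hstep
  refine ⟨_, _, hasSum_tiltedConvIter_mul_pow hF t, hasSum_tiltedConvIter_mul_pow hF' t, ?_⟩
  calc (∏ s ∈ Finset.range t, F s) * ∏ s ∈ Finset.range t, F' s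
      = ∏ s ∈ Finset.range t, F s * F' s := Finset.prod_mul_distrib.symm
    _ ≤ ∏ _s ∈ Finset.range t, exp (2 * (α * ε) * (x + x⁻¹ - 2) / δ ^ 2) :=
      Finset.prod_le_prod (fun s _ => h0 s) (fun s _ => hle s)
    _ = _ := by rw [Finset.prod_const, Finset.card_range]

lemma tiltedConvIter_mgf_mul_le (hν0 : 0 ≤ ν) (hν1 : ν < 1) (hα : 0 ≤ α) (hρ0 : 0 ≤ ρ)
    (hρ1 : ρ ≤ 1) :
    ∃ θ₁ > 0, ∃ K ≥ 0, ∀ ε, 0 ≤ ε → ∀ θ, 0 ≤ θ → θ ≤ θ₁ → ∀ t : ℕ, ∃ G G',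
      HasSum (fun n : ℕ => tiltedConvIter ν α ρ ε J t n * exp (θ * n)) G ∧
      HasSum (fun n : ℕ => tiltedConvIter ν α ρ ε J t n * exp (-θ * n)) G' ∧
      G * G' ≤ exp (K * (t * ε * θ ^ 2)) := by
  set η := tiltedRatio α ν ρ
  have hη0 : 0 ≤ η := tiltedRatio_nonneg hα hν0 hρ0
  have hη1 : η < 1 := tiltedRatio_lt_one hα hν0 hν1 hρ1
  set x₁ := 2 / (1 + η)
  have hx₁ : 1 < x₁ := (one_lt_div (by linarith)).2 (by linarith)
  set δ := (1 - η) / (1 + η)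
  have hδ : 0 < δ := div_pos (by linarith) (by linarith)
  have hδx₁ : δ = 1 - η * x₁ := by simp only [δ, x₁]; field_simp; ring
  refine ⟨log x₁, log_pos hx₁, 2 * α * x₁ / δ ^ 2, by positivity, fun ε hε θ hθ0 hθ t => ?_⟩
  have hxθ₁ : exp θ ≤ x₁ := by
    rw [← exp_log (by linarith : 0 < x₁)]; exact exp_le_exp.2 hθ
  obtain ⟨G, G', hG, hG', hGG'⟩ := tiltedConvIter_genFun_mul_genFun_inv_le (J := J)
    hν0 hν1 hα hρ0 hρ1 hε (one_le_exp hθ0) hδ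
    (by rw [hδx₁]; nlinarith [mul_le_mul_of_nonneg_left hxθ₁ hη0]) t
  refine ⟨G, G', ?_, ?_, hGG'.trans ?_⟩
  · simpa only [mul_comm θ, exp_nat_mul] using hG
  · simpa only [← exp_neg, mul_comm (-θ), exp_nat_mul] using hG'
  have hs : exp θ + (exp θ)⁻¹ - 2 ≤ θ ^ 2 * x₁ := by
    rw [← exp_neg]
    exact (exp_add_exp_neg_sub_two_le hθ0).trans (by gcongr)
  rw [← exp_nat_mul, exp_le_exp]
  calc (t : ℝ) * (2 * (α * ε) * (exp θ + (exp θ)⁻¹ - 2) / δ ^ 2)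
      ≤ t * (2 * (α * ε) * (θ ^ 2 * x₁) / δ ^ 2) := by gcongr
    _ = 2 * α * x₁ / δ ^ 2 * (t * ε * θ ^ 2) := by ring

end TiltedConvIter

theorem tiltedConvIter_exp_moment_general (ν α ρ : ℝ) (J : ℕ)
    (hν0 : 0 ≤ ν) (hν1 : ν < 1) (hα : 0 < α) (hρ0 : 0 < ρ) (hρ1 : ρ < 1)
    (u T : ℝ) (hu : 0 < u) :
    ∃ C : ℝ, ∃ ε₀ : ℝ, ε₀ ∈ Set.Ioc (0 : ℝ) 1 ∧
      ∀ ε ∈ Set.Ioc (0 : ℝ) ε₀, ∀ t : ℕ, (t : ℝ) ≤ T / ε ^ 3 →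
        Summable (fun n : ℕ => tiltedConvIter ν α ρ ε J t n *
          Real.exp (u * ε *
            |(n : ℝ) - ∑' m : ℕ, (m : ℝ) * tiltedConvIter ν α ρ ε J t m|)) ∧
        (∑' n : ℕ, tiltedConvIter ν α ρ ε J t n *
          Real.exp (u * ε *
            |(n : ℝ) - ∑' m : ℕ, (m : ℝ) * tiltedConvIter ν α ρ ε J t m|)) ≤ C := by
  obtain ⟨θ₁, hθ₁, K, hK, hmgf⟩ := tiltedConvIter_mgf_mul_le (J := J) hν0 hν1 hα.le hρ0.le hρ1.le
  refine ⟨2 * exp (K * (u ^ 2 * T)), min 1 (θ₁ / u),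
    ⟨lt_min one_pos (div_pos hθ₁ hu), min_le_left _ _⟩, ?_⟩
  rintro ε ⟨hε, hεε₀⟩ t ht
  have hθ : u * ε ≤ θ₁ := by
    rw [mul_comm, ← le_div_iff₀ hu]; exact hεε₀.trans (min_le_right _ _)
  obtain ⟨G, G', hG, hG', hGG'⟩ := hmgf ε hε.le (u * ε) (by positivity) hθ t
  have htT : t * ε * (u * ε) ^ 2 ≤ u ^ 2 * T := by
    have := (le_div_iff₀ (by positivity)).1 ht
    nlinarith [sq_nonneg u]
  refine (tsum_mul_exp_abs_sub_mean_le (X := fun n : ℕ => (n : ℝ)) (by positivity)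
    (tiltedConvIter_nonneg hν0 hν1 hα.le hρ0.le hρ1.le hε.le t)
    (hasSum_tiltedConvIter hν0 hν1 hα.le hρ0.le hρ1.le hε.le t) hG hG').imp_right
    fun h => h.trans ?_
  nlinarith [exp_le_exp.2 (mul_le_mul_of_nonneg_left htT hK)]

/-- For every `u > 0` and `T > 0` there are `C < ∞` and `ε₀ ∈ (0,1]` such
that for all `ε ∈ (0,ε₀]` and `t ≤ ε^{−3}T`, the `t`-fold convolution `P_ε^t` satisfies
`∑_n P_ε^t(n) e^{uε|n − M_ε(t)|} ≤ C`, where `M_ε(t)` is the mean of `P_ε^t`. -/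
theorem tiltedConvIter_exp_moment (ν α ρ : ℝ) (J : ℕ)
    (hν0 : 0 ≤ ν) (hν1 : ν < 1) (hα : 0 < α) (hρ0 : 0 < ρ) (hρ1 : ρ < 1) (hJ : 0 < J)
    (u T : ℝ) (hu : 0 < u) (hT : 0 < T) :
    ∃ C : ℝ, ∃ ε₀ : ℝ, ε₀ ∈ Set.Ioc (0 : ℝ) 1 ∧
      ∀ ε ∈ Set.Ioc (0 : ℝ) ε₀, ∀ t : ℕ, (t : ℝ) ≤ T / ε ^ 3 →
        Summable (fun n : ℕ => tiltedConvIter ν α ρ ε J t n *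
          Real.exp (u * ε *
            |(n : ℝ) - ∑' m : ℕ, (m : ℝ) * tiltedConvIter ν α ρ ε J t m|)) ∧
        (∑' n : ℕ, tiltedConvIter ν α ρ ε J t n *
          Real.exp (u * ε *
            |(n : ℝ) - ∑' m : ℕ, (m : ℝ) * tiltedConvIter ν α ρ ε J t m|)) ≤ C :=
  tiltedConvIter_exp_moment_general ν α ρ J hν0 hν1 hα hρ0 hρ1 u T hu
end
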